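/- arXiv:1907.01214 — 4 statements merged into one kernel-verified Lean document; each statement's English description precedes it below -/
import Mathlib

section
/- If L is a reversible language and u, v are words, then the bidirectional quotient u^{-1}Lv^{-1} ∪ (v^r)^{-1}L(u^r)^{-1} is reversible. -/
def revLang {A : Type*} (L : Set (List A)) : Set (List A) :=
  (fun w => w.reverse) '' L

def Reversible {A : Type*} (L : Set (List A)) : Prop :=
  revLang L = L

/-- Two-sided quotient `u⁻¹ L v⁻¹`. -/
def biQuot {A : Type*} (u : List A) (L : Set (List A)) (v : List A) : Set (List A) :=
  {w | u ++ w ++ v ∈ L}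

lemma mem_revLang {A : Type*} {L : Set (List A)} {w : List A} :
    w ∈ revLang L ↔ w.reverse ∈ L := by
  constructor
  · rintro ⟨x, hx, rfl⟩; simpa using hx
  · intro h; exact ⟨w.reverse, h, by simp⟩

theorem bidirectional_quotient_reversible {A : Type*} (L : Set (List A))
    (hL : Reversible L) (u v : List A) :
    Reversible (biQuot u L v ∪ biQuot v.reverse L u.reverse) := by
  have hmem : ∀ x : List A, x ∈ L ↔ x.reverse ∈ L := by
    intro x
    conv_lhs => rw [← hL]
    exact mem_revLang
  ext w
  simp only [revLang, Set.mem_union, biQuot, Set.mem_setOf_eq, mem_revLang,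
    Set.mem_image]
  constructor
  · rintro ⟨x, hx, rfl⟩
    rcases hx with h | h
    · right; rw [hmem] at h; simpa using h
    · left; rw [hmem] at h; simpa using h
  · intro h
    refine ⟨w.reverse, ?_, by simp⟩
    rcases h with h | h
    · right; rw [hmem] at h; simpa using h
    · left; rw [hmem] at h; simpa using h
end

section
/- A language L is reversible and regular if and only if L is recognised by a finite monoid with involution, i.e., there is a morphism of involution monoids h : (A*, ·, r) → (M, ·, ⋆) with M finite and a subset P ⊆ M with P⋆ = P and L = h^{-1}(P). -/
open MulOpposite

theorem reversible_iff_forall_reverse_mem {A : Type*} {L : Set (List A)} :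
    Reversible L ↔ ∀ w, w.reverse ∈ L ↔ w ∈ L := by
  rw [Reversible, revLang, List.reverse_involutive.image_eq_preimage_symm, Set.ext_iff]
  rfl

section WordMaps

variable {A M : Type*} {h : List A → M}

theorem reversible_preimage {star : M → M} (hstar : Function.Involutive star)
    (hrev : ∀ x, h x.reverse = star (h x)) {P : Set M} (hP : star '' P = P) :
    Reversible (h ⁻¹' P) := by
  have hP' : star ⁻¹' P = P := hstar.image_eq_preimage_symm ▸ hP
  refine reversible_iff_forall_reverse_mem.mpr fun w => ?_
  change h w.reverse ∈ P ↔ h w ∈ P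
  rw [hrev, ← Set.mem_preimage, hP']

theorem isRegular_preimage [Mul M] [Finite M] (hmul : ∀ x y, h (x ++ y) = h x * h y)
    (P : Set M) : Language.IsRegular (h ⁻¹' P : Language A) := by
  let D : DFA A M := ⟨fun m a => m * h [a], h [], P⟩
  have eval_eq : ∀ w, D.eval w = h w := by
    intro w
    induction w using List.reverseRecOn with
    | nil => rfl
    | append_singleton w a ih => rw [DFA.eval_append_singleton, ih, hmul]
  exact Language.isRegular_iff.mpr ⟨M, Fintype.ofFinite M, D, Set.ext fun w => by
    change D.eval w ∈ P ↔ h w ∈ P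
    rw [eval_eq]⟩

end WordMaps

instance MulOpposite.finite {α : Type*} [Finite α] : Finite αᵐᵒᵖ :=
  .of_equiv α opEquiv

instance Function.End.finite {α : Type*} [Finite α] : Finite (Function.End α) :=
  inferInstanceAs (Finite (α → α))

namespace DFA

variable {α σ : Type*} (D : DFA α σ)

/-- The opposite monoid makes this multiplicative: functions compose right to left, while words
are read left to right. -/
def transition (w : List α) : (Function.End σ)ᵐᵒᵖ :=
  op (D.evalFrom · w)

theorem transition_nil : D.transition [] = 1 := rfl

theorem transition_append (x y : List α) :
    D.transition (x ++ y) = D.transition x * D.transition y := by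
  rw [transition, ← unop_inj]
  funext s
  exact D.evalFrom_of_append s x y

theorem accepts_eq_preimage_transition :
    D.accepts = D.transition ⁻¹' {f | f.unop D.start ∈ D.accept} := rfl

end DFA

section SwapInvolution

variable {A N : Type*}

def swapStar (p : N × Nᵐᵒᵖ) : N × Nᵐᵒᵖ :=
  (p.2.unop, op p.1)

theorem swapStar_involutive : Function.Involutive (swapStar (N := N)) :=
  fun _ => rfl

theorem swapStar_mul [Mul N] (p q : N × Nᵐᵒᵖ) : swapStar (p * q) = swapStar q * swapStar p := by
  simp [swapStar]

theorem swapStar_image_setOf_and (Q : Set N) :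
    swapStar '' {p : N × Nᵐᵒᵖ | p.1 ∈ Q ∧ p.2.unop ∈ Q} = {p | p.1 ∈ Q ∧ p.2.unop ∈ Q} := by
  rw [swapStar_involutive.image_eq_preimage_symm]
  ext p
  exact and_comm

def pairReverse (t : List A → N) (w : List A) : N × Nᵐᵒᵖ :=
  (t w, op (t w.reverse))

variable {t : List A → N}

theorem pairReverse_nil [One N] (h1 : t [] = 1) : pairReverse t [] = 1 := by
  simp [pairReverse, h1]

theorem pairReverse_append [Mul N] (hmul : ∀ x y, t (x ++ y) = t x * t y) (x y : List A) :
    pairReverse t (x ++ y) = pairReverse t x * pairReverse t y := by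
  simp [pairReverse, hmul]

theorem pairReverse_reverse (w : List A) :
    pairReverse t w.reverse = swapStar (pairReverse t w) := by
  simp [pairReverse, swapStar]

theorem preimage_pairReverse_of_reversible {Q : Set N} (hL : Reversible (t ⁻¹' Q)) :
    pairReverse t ⁻¹' {p | p.1 ∈ Q ∧ p.2.unop ∈ Q} = t ⁻¹' Q := by
  ext w
  exact and_iff_left_of_imp (reversible_iff_forall_reverse_mem.mp hL w).mpr

end SwapInvolution

theorem reversible_regular_iff_star_monoid {A : Type*} (L : Set (List A)) :
    (Reversible L ∧ Language.IsRegular (L : Language A)) ↔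
    (∃ (M : Type) (_ : Monoid M) (_ : Fintype M) (star : M → M) (h : List A → M)
        (P : Set M),
      (∀ a : M, star (star a) = a) ∧
      (∀ a b : M, star (a * b) = star b * star a) ∧
      h [] = 1 ∧
      (∀ x y : List A, h (x ++ y) = h x * h y) ∧
      (∀ x : List A, h x.reverse = star (h x)) ∧
      star '' P = P ∧
      L = h ⁻¹' P) := by
  constructor
  · rintro ⟨hrev, σ, _, D, rfl⟩
    rw [D.accepts_eq_preimage_transition] at hrev ⊢
    exact ⟨_, inferInstance, Fintype.ofFinite _, swapStar, pairReverse D.transition, _,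
      swapStar_involutive, swapStar_mul, pairReverse_nil D.transition_nil,
      pairReverse_append D.transition_append, pairReverse_reverse, swapStar_image_setOf_and _,
      (preimage_pairReverse_of_reversible hrev).symm⟩
  · rintro ⟨M, _, _, star, h, P, hstar, -, -, hmul, hrev, hP, rfl⟩
    exact ⟨reversible_preimage hstar hrev hP, isRegular_preimage hmul P⟩
end

section
/- If v ≈^t_k w, then for every word u, uv ≈^t_k uw or uv ≈^t_k uw^r. -/
/-- Number of occurrences of `v` or `v.reverse` in `w`. -/
def occR {A : Type*} [DecidableEq A] (w v : List A) : ℕ :=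
  (List.range (w.length + 1)).countP
    (fun i => decide ((w.drop i).take v.length = v ∨ (w.drop i).take v.length = v.reverse))

/-- Equality up to threshold `t`. -/
def thrEq (t i j : ℕ) : Prop := i = j ∨ (t ≤ i ∧ t ≤ j)

/-- The `(k,t)`-locally-reversible threshold testable equivalence. -/
def LRTT {A : Type*} [DecidableEq A] (k t : ℕ) (w w' : List A) : Prop :=
  (w.length < k ∧ (w' = w ∨ w' = w.reverse)) ∨
  (k ≤ w.length ∧ k ≤ w'.length ∧
    (∀ v : List A, v.length ≤ k → thrEq t (occR w v) (occR w' v)) ∧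
    ({w.take (k - 1), (w.drop (w.length - (k - 1))).reverse} : Set (List A)) =
      {w'.take (k - 1), (w'.drop (w'.length - (k - 1))).reverse})

/-!
A window of length at most `k` that starts inside `u` ends within the first `k - 1` letters of
`v`, so prepending `u` adds the same number of occurrences to `v` and to `w` as soon as their
prefixes of length `k - 1` agree; the suffixes of length `k - 1` do not change at all. Since
`v ≈ w` pairs the prefix of `v` either with the prefix of `w` or with the reversed suffix of `w`,
i.e. with the prefix of `wʳ`, and occurrence counts are invariant under reversal, one of `w`, `wʳ`
is matched to `v` prefix-to-prefix and suffix-to-suffix, and that matching survives prepending `u`.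
-/

lemma thrEq.add_left {t i j : ℕ} (h : thrEq t i j) (c : ℕ) : thrEq t (c + i) (c + j) := by
  unfold thrEq at *
  omega

section Windows

variable {A : Type*}

lemma take_drop_take_of_add_le (l : List A) {i n m : ℕ} (h : i + n ≤ m) :
    ((l.take m).drop i).take n = (l.drop i).take n := by
  rw [List.drop_take, List.take_take]
  congr 1
  omega

lemma take_drop_reverse (w : List A) {i n j : ℕ} (h : i + n + j = w.length) :
    (w.reverse.drop i).take n = ((w.drop j).take n).reverse := by
  rw [List.drop_reverse, List.take_reverse, List.length_take, List.drop_take,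
    min_eq_left (Nat.sub_le _ _), show w.length - i - n = j by omega,
    show w.length - i - j = n by omega]

lemma take_append_congr (u : List A) {v w : List A} {n : ℕ} (h : v.take n = w.take n) :
    (u ++ v).take n = (u ++ w).take n := by
  rw [List.take_append, List.take_append, ← min_eq_left (Nat.sub_le n u.length), ← List.take_take,
    h, List.take_take]

lemma rtake_append_of_le_length (u : List A) {v : List A} {n : ℕ} (h : n ≤ v.length) :
    (u ++ v).rtake n = v.rtake n := by
  rw [List.rtake, List.rtake, List.length_append, Nat.add_sub_assoc h, List.drop_length_add_append]

lemma rtake_reverse (l : List A) (n : ℕ) : l.reverse.rtake n = (l.take n).reverse := by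
  rw [List.rtake_eq_reverse_take_reverse, List.reverse_reverse]

lemma take_reverse_eq_reverse_rtake (l : List A) (n : ℕ) :
    l.reverse.take n = (l.rtake n).reverse := by
  rw [List.rtake_eq_reverse_take_reverse, List.reverse_reverse]

variable [DecidableEq A]

def occursAt (w x : List A) (i : ℕ) : Bool :=
  decide ((w.drop i).take x.length = x ∨ (w.drop i).take x.length = x.reverse)

lemma occR_eq_countP (w x : List A) :
    occR w x = (List.range (w.length + 1)).countP (occursAt w x) := rfl

lemma add_length_le_of_occursAt {w x : List A} {i : ℕ} (hi : i ≤ w.length)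
    (h : occursAt w x i) :
    i + x.length ≤ w.length := by
  have hlen : ((w.drop i).take x.length).length = x.length := by
    simp only [occursAt, decide_eq_true_eq] at h
    rcases h with h | h <;> simp [h]
  simp only [List.length_take, List.length_drop] at hlen
  omega

lemma occursAt_reverse {w x : List A} {i j : ℕ} (h : i + x.length + j = w.length) :
    occursAt w.reverse x i = occursAt w x j := by
  simp only [occursAt, take_drop_reverse w h, List.reverse_eq_iff, List.reverse_reverse, or_comm]

lemma countP_range_eq_card_filter (n : ℕ) (p : ℕ → Bool) :
    (List.range n).countP p = ((Finset.range n).filter (fun i => p i)).card := by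
  simp [Finset.range, Multiset.range, List.countP_eq_length_filter,
    Finset.filter, Multiset.filter_coe]

-- Reading `wʳ` from the left is reading `w` from the right.
lemma occR_reverse (w x : List A) : occR w.reverse x = occR w x := by
  rw [occR_eq_countP, occR_eq_countP, countP_range_eq_card_filter,
    countP_range_eq_card_filter, List.length_reverse]
  have hbound {y : List A} {i : ℕ} (hy : y.length = w.length)
      (hi : i ∈ (Finset.range (w.length + 1)).filter (fun i => occursAt y x i)) :
      i + x.length ≤ w.length := by
    rw [Finset.mem_filter, Finset.mem_range] at hi
    exact hy ▸ add_length_le_of_occursAt (by omega) hi.2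
  apply Finset.card_nbij' (fun i => w.length - x.length - i) (fun i => w.length - x.length - i)
  · intro i hi
    have hb := hbound List.length_reverse hi
    simp only [Finset.coe_filter, Finset.mem_range, Set.mem_ofPred_eq] at hi ⊢
    rw [← occursAt_reverse (by omega : i + x.length + (w.length - x.length - i) = w.length)]
    exact ⟨by omega, hi.2⟩
  · intro i hi
    have hb := hbound rfl hi
    simp only [Finset.coe_filter, Finset.mem_range, Set.mem_ofPred_eq] at hi ⊢
    rw [occursAt_reverse (by omega : w.length - x.length - i + x.length + i = w.length)]
    exact ⟨by omega, hi.2⟩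
  · intro i hi
    have hb := hbound List.length_reverse hi
    dsimp only
    omega
  · intro i hi
    have hb := hbound rfl hi
    dsimp only
    omega

lemma occR_append (u v x : List A) :
    occR (u ++ v) x = (List.range u.length).countP (occursAt (u ++ v) x) + occR v x := by
  rw [occR_eq_countP, occR_eq_countP, List.length_append, Nat.add_assoc, List.range_add,
    List.countP_append, List.countP_map]
  congr 1
  refine List.countP_congr fun i _ => ?_
  simp only [Function.comp_apply, occursAt, List.drop_length_add_append]

lemma occursAt_append_congr {k : ℕ} {u v w x : List A} {i : ℕ} (hi : i < u.length)
    (hx : x.length ≤ k) (h : v.take (k - 1) = w.take (k - 1)) :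
    occursAt (u ++ v) x i = occursAt (u ++ w) x i := by
  have hwin : i + x.length ≤ u.length + (k - 1) := by omega
  have hwindow : ((u ++ v).drop i).take x.length = ((u ++ w).drop i).take x.length := by
    rw [← take_drop_take_of_add_le (u ++ v) hwin, ← take_drop_take_of_add_le (u ++ w) hwin,
      List.take_append, List.take_append, Nat.add_sub_cancel_left, h]
  simp only [occursAt, hwindow]

end Windows

section Aligned

variable {A : Type*} [DecidableEq A]

lemma LRTT.refl (k t : ℕ) (w : List A) : LRTT k t w w := by
  rcases lt_or_ge w.length k with h | h
  · exact Or.inl ⟨h, Or.inl rfl⟩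
  · exact Or.inr ⟨h, h, fun _ _ => Or.inl rfl, rfl⟩

/-- The long case of `LRTT k t v w` with the prefix of `v` matched to the prefix of `w`. -/
structure AlignedLRTT (k t : ℕ) (v w : List A) : Prop where
  le_length_left : k ≤ v.length
  le_length_right : k ≤ w.length
  occR_thrEq : ∀ x : List A, x.length ≤ k → thrEq t (occR v x) (occR w x)
  take_eq : v.take (k - 1) = w.take (k - 1)
  rtake_eq : v.rtake (k - 1) = w.rtake (k - 1)

namespace AlignedLRTT

variable {k t : ℕ} {v w : List A}

lemma lrtt (h : AlignedLRTT k t v w) : LRTT k t v w := by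
  refine Or.inr ⟨h.le_length_left, h.le_length_right, h.occR_thrEq, ?_⟩
  change {v.take (k - 1), (v.rtake (k - 1)).reverse} = {w.take (k - 1), (w.rtake (k - 1)).reverse}
  rw [h.take_eq, h.rtake_eq]

lemma reverse_of_crossed (hv : k ≤ v.length) (hw : k ≤ w.length)
    (hocc : ∀ x : List A, x.length ≤ k → thrEq t (occR v x) (occR w x))
    (htake : v.take (k - 1) = (w.rtake (k - 1)).reverse)
    (hrtake : (v.rtake (k - 1)).reverse = w.take (k - 1)) :
    AlignedLRTT k t v w.reverse where
  le_length_left := hv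
  le_length_right := by rwa [List.length_reverse]
  occR_thrEq x hx := by rw [occR_reverse]; exact hocc x hx
  take_eq := by rw [take_reverse_eq_reverse_rtake, htake]
  rtake_eq := by rw [rtake_reverse, ← hrtake, List.reverse_reverse]

lemma append_left (h : AlignedLRTT k t v w) (u : List A) :
    AlignedLRTT k t (u ++ v) (u ++ w) where
  le_length_left := h.le_length_left.trans (List.suffix_append u v).length_le
  le_length_right := h.le_length_right.trans (List.suffix_append u w).length_le
  occR_thrEq x hx := by
    have hprefix : (List.range u.length).countP (occursAt (u ++ v) x) =
        (List.range u.length).countP (occursAt (u ++ w) x) :=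
      List.countP_congr fun i hi => by
        rw [occursAt_append_congr (List.mem_range.1 hi) hx h.take_eq]
    rw [occR_append, occR_append, hprefix]
    exact (h.occR_thrEq x hx).add_left _
  take_eq := take_append_congr u h.take_eq
  rtake_eq := by
    rw [rtake_append_of_le_length u ((Nat.sub_le k 1).trans h.le_length_left),
      rtake_append_of_le_length u ((Nat.sub_le k 1).trans h.le_length_right), h.rtake_eq]

end AlignedLRTT

lemma LRTT.eq_or_aligned {k t : ℕ} {v w : List A} (h : LRTT k t v w) :
    w = v ∨ w = v.reverse ∨ AlignedLRTT k t v w ∨ AlignedLRTT k t v w.reverse := by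
  rcases h with ⟨_, hw⟩ | ⟨hv, hw, hocc, hends⟩
  · tauto
  change {v.take (k - 1), (v.rtake (k - 1)).reverse} =
    ({w.take (k - 1), (w.rtake (k - 1)).reverse} : Set (List A)) at hends
  rcases Set.pair_eq_pair_iff.1 hends with ⟨htake, hrtake⟩ | ⟨htake, hrtake⟩
  · exact Or.inr (Or.inr (Or.inl ⟨hv, hw, hocc, htake, List.reverse_injective hrtake⟩))
  · exact Or.inr (Or.inr (Or.inr (AlignedLRTT.reverse_of_crossed hv hw hocc htake hrtake)))

end Aligned

theorem lrtt_left_mul_general {A : Type*} [DecidableEq A] (k t : ℕ)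
    (v w : List A) (hvw : LRTT k t v w) (u : List A) :
    LRTT k t (u ++ v) (u ++ w) ∨ LRTT k t (u ++ v) (u ++ w.reverse) := by
  rcases hvw.eq_or_aligned with rfl | rfl | h | h
  · exact Or.inl (LRTT.refl k t _)
  · exact Or.inr (by rw [List.reverse_reverse]; exact LRTT.refl k t _)
  · exact Or.inl (h.append_left u).lrtt
  · exact Or.inr (h.append_left u).lrtt

theorem lrtt_left_mul {A : Type*} [DecidableEq A] (k t : ℕ) (hk : 0 < k) (ht : 0 < t)
    (v w : List A) (hvw : LRTT k t v w) (u : List A) :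
    LRTT k t (u ++ v) (u ++ w) ∨ LRTT k t (u ++ v) (u ++ w.reverse) :=
  lrtt_left_mul_general k t v w hvw u
end

section
/- For words u (nonempty), s, and contexts α, β, if w = u^k s (u^k)^r and k, t > 0, then α w β ≈^t_k α w^r β. -/
/-- `u^k`, the `k`-fold concatenation of `u`. -/
def wpow {A : Type*} (u : List A) (k : ℕ) : List A :=
  (List.replicate k u).flatten

/-! If a word `c` agrees with `c^r` on its first `k` letters, it also agrees with it on its last
`k` letters. So in `p c q` versus `p c^r q`, a window of length at most `k` that is not contained in
`c` sees the same letters in both words, while reflecting positions inside `c` turns an occurrence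
of `v` into one of `v^r`. Hence all `♯^r`-counts agree exactly, as do the prefixes and suffixes of
length `k - 1`. Both `w = u^k s (u^k)^r` and `w^r` begin with `u^k`, of length at least `k`. -/

namespace List

variable {A : Type*}

theorem take_drop_eq_of_take_eq {l l' : List A} {n i m : ℕ} (h : l.take n = l'.take n)
    (hm : i + m ≤ n) : (l.drop i).take m = (l'.drop i).take m := by
  have h' := congrArg (fun x : List A => (x.drop i).take m) h
  simpa [drop_take, take_take, Nat.min_eq_left (show m ≤ n - i by omega)] using h'

theorem drop_eq_of_drop_eq_of_le {l l' : List A} {n i : ℕ} (h : l.drop n = l'.drop n)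
    (hn : n ≤ i) : l.drop i = l'.drop i := by
  have h' := congrArg (drop (i - n)) h
  simpa [drop_drop, Nat.add_sub_cancel' hn] using h'

theorem take_drop_reverse {c : List A} {j m : ℕ} (hj : j + m ≤ c.length) :
    (c.reverse.drop (c.length - m - j)).take m = ((c.drop j).take m).reverse := by
  have hlen : (c.take (j + m)).length = j + m := length_take_of_le hj
  rw [take_drop (l := c), reverse_drop, hlen, reverse_take, Nat.add_sub_cancel_left,
    show c.length - m - j = c.length - (j + m) by omega]

theorem drop_length_sub_eq_of_take_eq_take_reverse {c : List A} {r : ℕ}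
    (hc : c.take r = c.reverse.take r) :
    c.drop (c.length - r) = c.reverse.drop (c.length - r) := by
  have h := congrArg reverse hc
  rwa [reverse_take, reverse_take, reverse_reverse, length_reverse, eq_comm] at h

theorem take_append_reverse_append {c : List A} {r : ℕ} (p q : List A)
    (hc : c.take r = c.reverse.take r) :
    (p ++ c ++ q).take (p.length + r) = (p ++ c.reverse ++ q).take (p.length + r) := by
  rw [append_assoc, append_assoc, take_length_add_append, take_length_add_append, take_append,
    take_append, hc, length_reverse]

theorem drop_append_reverse_append {c : List A} {r : ℕ} (p q : List A)
    (hc : c.take r = c.reverse.take r) :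
    (p ++ c ++ q).drop (p.length + (c.length - r)) =
      (p ++ c.reverse ++ q).drop (p.length + (c.length - r)) := by
  have hd := drop_length_sub_eq_of_take_eq_take_reverse hc
  rw [append_assoc, append_assoc, drop_length_add_append, drop_length_add_append, drop_append,
    drop_append, hd, length_reverse]

theorem take_drop_append_add {c : List A} {j m : ℕ} (p q : List A) (hj : j + m ≤ c.length) :
    ((p ++ c ++ q).drop (p.length + j)).take m = (c.drop j).take m := by
  rw [append_assoc, drop_length_add_append, drop_append_of_le_length (by omega),
    take_append_of_le_length (by rw [length_drop]; omega)]

end List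

section Occurrences

variable {A : Type*}

abbrev OccRAt (w v : List A) (i : ℕ) : Prop :=
  (w.drop i).take v.length = v ∨ (w.drop i).take v.length = v.reverse

theorem occR_eq_card_filter [DecidableEq A] (w v : List A) :
    occR w v = ((Finset.range (w.length + 1)).filter (OccRAt w v)).card := by
  rw [occR, List.countP_eq_length_filter]
  rfl

def mirrorPos (lo hi m i : ℕ) : ℕ :=
  if lo ≤ i ∧ i + m ≤ hi then lo + hi - m - i else i

theorem mirrorPos_mirrorPos {lo hi m i : ℕ} : mirrorPos lo hi m (mirrorPos lo hi m i) = i := by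
  unfold mirrorPos
  split_ifs <;> omega

theorem mirrorPos_le {lo hi m i n : ℕ} (hhi : hi ≤ n) (hin : i ≤ n) :
    mirrorPos lo hi m i ≤ n := by
  unfold mirrorPos
  split_ifs <;> omega

theorem OccRAt.mirror {p c q v : List A} {r i : ℕ} (hv : v.length ≤ r)
    (hc : c.take r = c.reverse.take r) (h : OccRAt (p ++ c ++ q) v i) :
    OccRAt (p ++ c.reverse ++ q) v (mirrorPos p.length (p.length + c.length) v.length i) := by
  unfold mirrorPos
  split_ifs with hin
  · obtain ⟨j, rfl⟩ : ∃ j, i = p.length + j := ⟨i - p.length, by omega⟩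
    have hj : j + v.length ≤ c.length := by omega
    rw [show p.length + (p.length + c.length) - v.length - (p.length + j) =
      p.length + (c.length - v.length - j) by omega]
    unfold OccRAt at h ⊢
    rw [List.take_drop_append_add p q (by rw [List.length_reverse]; omega),
      List.take_drop_reverse hj]
    rw [List.take_drop_append_add p q hj] at h
    rcases h with h | h <;> simp [h]
  · -- a window starting in `p` or ending in `q` lies in the common prefix or the common suffix
    by_cases hip : i < p.length
    · rwa [OccRAt, ← List.take_drop_eq_of_take_eq (List.take_append_reverse_append p q hc)
        (by omega)]
    · rwa [OccRAt, ← List.drop_eq_of_drop_eq_of_le (List.drop_append_reverse_append p q hc)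
        (by omega)]

theorem occR_append_reverse_append [DecidableEq A] (p q : List A) {c v : List A} {r : ℕ}
    (hv : v.length ≤ r) (hc : c.take r = c.reverse.take r) :
    occR (p ++ c ++ q) v = occR (p ++ c.reverse ++ q) v := by
  have hc' : c.reverse.take r = c.reverse.reverse.take r := by rw [List.reverse_reverse, hc]
  have hlen : (p ++ c.reverse ++ q).length = (p ++ c ++ q).length := by simp
  set σ := mirrorPos p.length (p.length + c.length) v.length
  rw [occR_eq_card_filter, occR_eq_card_filter]
  refine Finset.card_nbij' σ σ ?_ ?_ (fun _ _ => mirrorPos_mirrorPos)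
    (fun _ _ => mirrorPos_mirrorPos)
  · intro i hi
    simp only [Finset.coe_filter, Finset.mem_range, Nat.lt_succ_iff, Set.mem_ofPred_eq] at hi ⊢
    exact ⟨hlen ▸ mirrorPos_le (by simp) hi.1, hi.2.mirror hv hc⟩
  · intro i hi
    simp only [Finset.coe_filter, Finset.mem_range, Nat.lt_succ_iff, Set.mem_ofPred_eq] at hi ⊢
    have h := hi.2.mirror hv hc'
    simp only [List.reverse_reverse, List.length_reverse] at h
    exact ⟨hlen ▸ mirrorPos_le (by simp) hi.1, h⟩

theorem lrtt_append_reverse_append [DecidableEq A] (k t : ℕ) (p q : List A) {c : List A}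
    (hk : k ≤ c.length) (hc : c.take k = c.reverse.take k) :
    LRTT k t (p ++ c ++ q) (p ++ c.reverse ++ q) := by
  have hlen : (p ++ c.reverse ++ q).length = (p ++ c ++ q).length := by simp
  have hprefix : (p ++ c ++ q).take (k - 1) = (p ++ c.reverse ++ q).take (k - 1) := by
    have h := congrArg (List.take (k - 1)) (List.take_append_reverse_append p q hc)
    rwa [List.take_take, List.take_take, Nat.min_eq_left (by omega)] at h
  have hsuffix : (p ++ c ++ q).drop ((p ++ c ++ q).length - (k - 1)) =
      (p ++ c.reverse ++ q).drop ((p ++ c.reverse ++ q).length - (k - 1)) := by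
    rw [hlen]
    exact List.drop_eq_of_drop_eq_of_le (List.drop_append_reverse_append p q hc)
      (by simp only [List.length_append]; omega)
  refine Or.inr ⟨by simp only [List.length_append]; omega,
    by simp only [List.length_append, List.length_reverse]; omega,
    fun v hv => Or.inl (occR_append_reverse_append p q hv hc), ?_⟩
  rw [hprefix, hsuffix]

end Occurrences

theorem lrtt_pumped_reverse_general {A : Type*} [DecidableEq A] (k t : ℕ)
    (u s α β : List A) (hu : u ≠ [])
    (w : List A) (hw : w = wpow u k ++ s ++ (wpow u k).reverse) :
    LRTT k t (α ++ w ++ β) (α ++ w.reverse ++ β) := by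
  have hk : k ≤ (wpow u k).length := by
    simpa [wpow] using Nat.le_mul_of_pos_right k (List.length_pos_iff.mpr hu)
  have hw' : w.reverse = wpow u k ++ (s.reverse ++ (wpow u k).reverse) := by simp [hw]
  refine lrtt_append_reverse_append k t α β (by simp only [hw, List.length_append]; omega) ?_
  rw [hw', hw, List.append_assoc, List.take_append_of_le_length hk,
    List.take_append_of_le_length hk]

theorem lrtt_pumped_reverse {A : Type*} [DecidableEq A] (k t : ℕ) (hk : 0 < k) (ht : 0 < t)
    (u s α β : List A) (hu : u ≠ [])
    (w : List A) (hw : w = wpow u k ++ s ++ (wpow u k).reverse) :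
    LRTT k t (α ++ w ++ β) (α ++ w.reverse ++ β) :=
  lrtt_pumped_reverse_general k t u s α β hu w hw
end
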